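/- Let A : (a,b) → ℝ^{n×n} be measurable and locally essentially bounded, and for a < t0 < b let Φ(·,t0) be the transition matrix of ż = A(t)z. Suppose Φ(t,t0) is totally positive (TP) for all a < t0 < t < b. Let z be a nontrivial solution, i.e. z(t) = Φ(t,t0)z0 for some z0 ≠ 0. Then s^+(z(t)) ≤ s^-(z(t0)) for all a < t0 < t < b; consequently both t ↦ s^-(z(t)) and t ↦ s^+(z(t)) are nonincreasing functions of t on (a,b). -/

import Mathlib

open Matrix MeasureTheory Set Polynomial Filter

noncomputable section

/-- Number of sign changes between adjacent entries of a list of reals. -/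
def signChanges : List ℝ → ℕ
  | [] => 0
  | [_] => 0
  | a :: b :: l => (if a * b < 0 then 1 else 0) + signChanges (b :: l)

/-- `s^-(y)`: the number of sign variations in `y` after deleting all zero entries. -/
def sMinus {n : ℕ} (y : Fin n → ℝ) : ℕ :=
  signChanges ((List.ofFn y).filter (fun x => decide (x ≠ 0)))

/-- `s^+(y)`: the maximal number of sign variations in `y` after each zero entry is
replaced by either `+1` or `-1`. -/
def sPlus {n : ℕ} (y : Fin n → ℝ) : ℕ :=
  Finset.univ.sup fun ε : Fin n → Bool =>
    signChanges (List.ofFn fun i => if y i = 0 then (if ε i then (1:ℝ) else -1) else y i)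

/-- A matrix is totally positive if all its minors are positive. -/
def IsTP {n m : ℕ} (A : Matrix (Fin n) (Fin m) ℝ) : Prop :=
  ∀ (k : ℕ) (r : Fin k → Fin n) (c : Fin k → Fin m),
    StrictMono r → StrictMono c → 0 < (A.submatrix r c).det

/-- A matrix is totally nonnegative if all its minors are nonnegative. -/
def IsTN {n m : ℕ} (A : Matrix (Fin n) (Fin m) ℝ) : Prop :=
  ∀ (k : ℕ) (r : Fin k → Fin n) (c : Fin k → Fin m),
    StrictMono r → StrictMono c → 0 ≤ (A.submatrix r c).det

/-- Tridiagonal with nonnegative sub- and super-diagonal entries. -/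
def InM {n : ℕ} (A : Matrix (Fin n) (Fin n) ℝ) : Prop :=
  (∀ i j : Fin n, ((i : ℕ) + 1 < (j : ℕ) ∨ (j : ℕ) + 1 < (i : ℕ)) → A i j = 0) ∧
  (∀ i j : Fin n, ((i : ℕ) = (j : ℕ) + 1 ∨ (j : ℕ) = (i : ℕ) + 1) → 0 ≤ A i j)

/-- Tridiagonal with positive sub- and super-diagonal entries. -/
def InMPlus {n : ℕ} (A : Matrix (Fin n) (Fin n) ℝ) : Prop :=
  (∀ i j : Fin n, ((i : ℕ) + 1 < (j : ℕ) ∨ (j : ℕ) + 1 < (i : ℕ)) → A i j = 0) ∧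
  (∀ i j : Fin n, ((i : ℕ) = (j : ℕ) + 1 ∨ (j : ℕ) = (i : ℕ) + 1) → 0 < A i j)

/-- `A` is measurable and locally essentially bounded on `(a,b)` (entrywise). -/
def GoodCoeff {n : ℕ} (a b : ℝ) (A : ℝ → Matrix (Fin n) (Fin n) ℝ) : Prop :=
  (∀ i j, Measurable fun t => A t i j) ∧
  ∀ K : Set ℝ, K ⊆ Set.Ioo a b → IsCompact K →
    ∃ C : ℝ, ∀ᵐ t ∂volume, t ∈ K → ∀ i j, |A t i j| ≤ C

/-- `Φ` is the transition matrix of `ż = A(t)z` on `(a,b)`, encoded through the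
equivalent integral equation `Φ(t,t0) = I + ∫_{t0}^t A(s)Φ(s,t0) ds`. -/
def IsTransitionOn {n : ℕ} (a b : ℝ) (A : ℝ → Matrix (Fin n) (Fin n) ℝ)
    (Φ : ℝ → ℝ → Matrix (Fin n) (Fin n) ℝ) : Prop :=
  ∀ t0 ∈ Set.Ioo a b, ∀ t ∈ Set.Ioo a b, ∀ i j,
    Φ t t0 i j = (1 : Matrix (Fin n) (Fin n) ℝ) i j + ∫ s in t0..t, (A s * Φ s t0) i j

/-!
The key is `s⁺(M x) ≤ s⁻(x)` for totally positive `M` and `x ≠ 0`. Split `x` into `l + 1 = s⁻(x) + 1` consecutive blocks on which `x` has the constant sign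
`σ (-1)^q`, each containing a nonzero entry. Then `M x = σ (M B) v`, where column `q` of `B`
carries `|x|` on block `q` and `v = ((-1)^q)_q`; by multilinearity of the determinant and total
positivity of `M`, all maximal minors of `M B` are positive. If `M x` had `l + 1` weak sign
changes, realised by rows `i₀ < ⋯ < i_{l+1}`, the Laplace expansion of the singular bordered
matrix `[C v | C]`, `C` the rows `iₚ` of `M B`, would be a vanishing sum of terms of one sign.
So `C v = 0`, and then `v = 0` since `C` has an invertible maximal minor: a contradiction.
Invertibility of `Φ(t, t₀)` keeps every `z(t₀)` nonzero, and monotonicity in `t` then follows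
from `s⁻ ≤ s⁺`.
-/

def nonzeros (L : List ℝ) : List ℝ := L.filter (fun x => decide (x ≠ 0))

lemma sMinus_eq_signChanges_nonzeros {n : ℕ} (y : Fin n → ℝ) :
    sMinus y = signChanges (nonzeros (List.ofFn y)) := rfl

lemma mem_nonzeros {L : List ℝ} {x : ℝ} : x ∈ nonzeros L ↔ x ∈ L ∧ x ≠ 0 := by
  simp [nonzeros]

lemma nonzeros_eq_nil {L : List ℝ} : nonzeros L = [] ↔ ∀ x ∈ L, x = 0 := by
  simp [nonzeros, List.filter_eq_nil_iff]

lemma nonzeros_append (L K : List ℝ) : nonzeros (L ++ K) = nonzeros L ++ nonzeros K :=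
  List.filter_append _ _

lemma nonzeros_eq_self {L : List ℝ} (h : ∀ x ∈ L, x ≠ 0) : nonzeros L = L :=
  List.filter_eq_self.2 (by simpa using h)

lemma signChanges_cons_cons (a b : ℝ) (l : List ℝ) :
    signChanges (a :: b :: l) = (if a * b < 0 then 1 else 0) + signChanges (b :: l) := rfl

lemma signChanges_le_cons (a : ℝ) (l : List ℝ) : signChanges l ≤ signChanges (a :: l) := by
  rcases l with _ | ⟨b, l⟩
  · exact le_rfl
  · rw [signChanges_cons_cons]; omega

lemma signChanges_append_pair (K : List ℝ) (b a : ℝ) :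
    signChanges (K ++ [b, a]) = signChanges (K ++ [b]) + if b * a < 0 then 1 else 0 := by
  induction K with
  | nil => simp [signChanges]
  | cons c K ih =>
    rcases K with _ | ⟨d, K⟩
    · simp only [List.nil_append, List.cons_append, signChanges_cons_cons] at ih ⊢
      omega
    · simp only [List.cons_append, signChanges_cons_cons] at ih ⊢
      omega

lemma signChanges_cons_le_cons_cons {a b : ℝ} (hb : b ≠ 0) {l : List ℝ}
    (hl : ∀ x ∈ l, x ≠ 0) : signChanges (a :: l) ≤ signChanges (a :: b :: l) := by
  rcases l with _ | ⟨c, l⟩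
  · exact Nat.zero_le _
  · have hc : c ≠ 0 := hl c List.mem_cons_self
    simp only [signChanges_cons_cons]
    -- a sign change from `a` to `c` is a sign change from `a` to `b` or from `b` to `c`
    have : a * c < 0 → a * b < 0 ∨ b * c < 0 := fun hac => by
      by_contra! h
      nlinarith [mul_pos (sq_pos_of_ne_zero hb) (neg_pos.2 hac)]
    split_ifs <;> first | omega | simp_all

lemma signChanges_cons_le_of_sublist {l₁ l₂ : List ℝ} (h : l₁.Sublist l₂)
    (hl₂ : ∀ x ∈ l₂, x ≠ 0) (a : ℝ) : signChanges (a :: l₁) ≤ signChanges (a :: l₂) := by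
  induction h generalizing a with
  | slnil => exact le_rfl
  | @cons _ l₂ b _ ih =>
    have hl : ∀ x ∈ l₂, x ≠ 0 := fun x hx => hl₂ x (List.mem_cons_of_mem _ hx)
    exact (ih hl a).trans (signChanges_cons_le_cons_cons (hl₂ b List.mem_cons_self) hl)
  | cons_cons b _ ih =>
    simp only [signChanges_cons_cons]
    have := ih (fun x hx => hl₂ x (List.mem_cons_of_mem _ hx)) b
    omega

lemma signChanges_le_of_sublist {l₁ l₂ : List ℝ} (h : l₁.Sublist l₂) (hl₂ : ∀ x ∈ l₂, x ≠ 0) :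
    signChanges l₁ ≤ signChanges l₂ := by
  induction h with
  | slnil => exact le_rfl
  | cons b _ ih =>
    exact (ih fun x hx => hl₂ x (List.mem_cons_of_mem _ hx)).trans (signChanges_le_cons _ _)
  | cons_cons b h _ =>
    exact signChanges_cons_le_of_sublist h (fun x hx => hl₂ x (List.mem_cons_of_mem _ hx)) b

/-- `J p` is the index of the sign block of `L` containing position `p`: the blocks are
consecutive, the entries of block `q` have sign `σ (-1)^q`, and each of the blocks
`0, …, s⁻(L)` contains a nonzero entry. `last_pos`, the sign of the last nonzero entry, is what
the induction over `L ++ [a]` needs. -/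
structure IsSignBlocking (L : List ℝ) (σ : ℝ) (J : ℕ → ℕ) : Prop where
  sign_eq : σ = 1 ∨ σ = -1
  monotone : Monotone J
  le_signChanges : ∀ p, J p ≤ signChanges (nonzeros L)
  sign_nonneg : ∀ p (hp : p < L.length), 0 ≤ σ * (-1) ^ J p * L[p]
  exists_ne_zero : nonzeros L ≠ [] → ∀ q ≤ signChanges (nonzeros L),
    ∃ p, ∃ hp : p < L.length, L[p] ≠ 0 ∧ J p = q
  last_pos : ∀ K b, nonzeros L = K ++ [b] → 0 < σ * (-1) ^ signChanges (nonzeros L) * b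

lemma isSignBlocking_nil : IsSignBlocking [] 1 0 where
  sign_eq := Or.inl rfl
  monotone := monotone_const
  le_signChanges _ := le_rfl
  sign_nonneg _ hp := absurd hp (Nat.not_lt_zero _)
  exists_ne_zero h := absurd rfl h
  last_pos K b h := by simp [nonzeros] at h

lemma IsSignBlocking.append_zero {L : List ℝ} {σ : ℝ} {J : ℕ → ℕ} (h : IsSignBlocking L σ J) :
    IsSignBlocking (L ++ [0]) σ J := by
  have hnz : nonzeros (L ++ [0]) = nonzeros L := by simp [nonzeros]
  refine ⟨h.sign_eq, h.monotone, ?_, fun p hp => ?_, fun hne q hq => ?_, ?_⟩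
  · simpa only [hnz] using h.le_signChanges
  · rcases lt_or_eq_of_le (Nat.le_of_lt_succ (by simpa using hp)) with hp | rfl
    · simpa [List.getElem_append_left hp] using h.sign_nonneg p hp
    · simp
  · rw [hnz] at hne hq
    obtain ⟨p, hp, hLp, hJp⟩ := h.exists_ne_zero hne q hq
    exact ⟨p, by simp; omega, by simpa [List.getElem_append_left hp] using hLp, hJp⟩
  · simpa only [hnz] using h.last_pos

lemma isSignBlocking_append_of_nonzeros_eq_nil {L : List ℝ} (hL : nonzeros L = []) {a : ℝ}
    (ha : a ≠ 0) : IsSignBlocking (L ++ [a]) (if 0 < a then 1 else -1) 0 := by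
  have hnz : nonzeros (L ++ [a]) = [a] := by
    rw [nonzeros_append, hL]; simp [nonzeros, ha]
  have hσa : 0 < (if 0 < a then 1 else -1) * a := by
    split_ifs with h
    · simpa using h
    · simpa using lt_of_le_of_ne (not_lt.1 h) ha
  refine ⟨by split_ifs <;> simp, monotone_const, fun _ => Nat.zero_le _, fun p hp => ?_,
    fun _ q hq => ?_, fun K b h => ?_⟩
  · rcases lt_or_eq_of_le (Nat.le_of_lt_succ (by simpa using hp)) with hp | rfl
    · simp [List.getElem_append_left hp, nonzeros_eq_nil.1 hL _ (List.getElem_mem hp)]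
    · simpa using hσa.le
  · rw [hnz] at hq
    exact ⟨L.length, by simp, by simpa using ha, by simp_all [signChanges]⟩
  · obtain rfl : a = b := by simpa [hnz] using congrArg List.getLast? h
    simpa [hnz, signChanges] using hσa

lemma IsSignBlocking.append {L K : List ℝ} {σ b a : ℝ} {J : ℕ → ℕ} (h : IsSignBlocking L σ J)
    (hL : nonzeros L = K ++ [b]) (ha : a ≠ 0) :
    IsSignBlocking (L ++ [a]) σ
      (fun p => if p < L.length then J p else signChanges (nonzeros (L ++ [a]))) := by
  set s := signChanges (nonzeros L)
  have hnz : nonzeros (L ++ [a]) = K ++ [b, a] := by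
    rw [nonzeros_append, hL]; simp [nonzeros, ha]
  have hs : signChanges (nonzeros (L ++ [a])) = s + if b * a < 0 then 1 else 0 := by
    rw [hnz, signChanges_append_pair, ← hL]
  have hlast : 0 < σ * (-1) ^ signChanges (nonzeros (L ++ [a])) * a := by
    have hb := h.last_pos K b hL
    set c := σ * (-1) ^ s
    have hc : c * c = 1 := by
      rcases h.sign_eq with rfl | rfl <;> simp [c, ← mul_pow]
    rw [hs]
    split_ifs with hba
    · rw [pow_succ, ← mul_assoc, mul_neg_one]
      nlinarith
    · have hbne : b ≠ 0 := right_ne_zero_of_mul hb.ne'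
      have := lt_of_le_of_ne (not_lt.1 hba) (mul_ne_zero hbne ha).symm
      rw [add_zero]
      nlinarith
  have hJs : ∀ p, J p ≤ signChanges (nonzeros (L ++ [a])) := fun p =>
    (h.le_signChanges p).trans (by rw [hs]; omega)
  refine ⟨h.sign_eq, fun p p' hpp' => ?_, fun p => ?_, fun p hp => ?_, fun _ q hq => ?_,
    fun K' b' h' => ?_⟩
  · split_ifs with h₁ h₂ h₂
    exacts [h.monotone hpp', hJs p, by omega, le_rfl]
  · split_ifs
    exacts [hJs p, le_rfl]
  · rcases lt_or_eq_of_le (Nat.le_of_lt_succ (by simpa using hp)) with hp | rfl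
    · simpa [List.getElem_append_left hp, hp] using h.sign_nonneg p hp
    · simpa using hlast.le
  · by_cases hqs : q ≤ s
    · obtain ⟨p, hp, hLp, rfl⟩ := h.exists_ne_zero (by simp [hL]) q hqs
      exact ⟨p, by simp; omega, by simpa [List.getElem_append_left hp] using hLp, by simp [hp]⟩
    · refine ⟨L.length, by simp, by simpa using ha, ?_⟩
      simp only [lt_irrefl, if_false]
      split_ifs at hs <;> omega
  · obtain rfl : a = b' := by simpa [hnz] using congrArg List.getLast? h'
    exact hlast

lemma exists_isSignBlocking (L : List ℝ) : ∃ σ J, IsSignBlocking L σ J := by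
  induction L using List.reverseRecOn with
  | nil => exact ⟨1, 0, isSignBlocking_nil⟩
  | append_singleton L a ih =>
    obtain ⟨σ, J, h⟩ := ih
    by_cases ha : a = 0
    · subst ha
      exact ⟨σ, J, h.append_zero⟩
    rcases (nonzeros L).eq_nil_or_concat with hL | ⟨K, b, hL⟩
    · exact ⟨_, 0, isSignBlocking_append_of_nonzeros_eq_nil hL ha⟩
    · exact ⟨σ, _, h.append (by simpa using hL) ha⟩

lemma exists_sign_blocks {n : ℕ} (x : Fin n → ℝ) :
    ∃ (σ : ℝ) (J : Fin n → Fin (sMinus x + 1)), (σ = 1 ∨ σ = -1) ∧ Monotone J ∧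
      (∀ j, 0 ≤ σ * (-1) ^ (J j : ℕ) * x j) ∧ (x ≠ 0 → ∀ q, ∃ j, x j ≠ 0 ∧ J j = q) := by
  obtain ⟨σ, J, h⟩ := exists_isSignBlocking (List.ofFn x)
  refine ⟨σ, fun j => ⟨J j, Nat.lt_succ_of_le (h.le_signChanges j)⟩, h.sign_eq,
    fun j j' hj => h.monotone hj, fun j => by simpa using h.sign_nonneg j (by simp),
    fun hx q => ?_⟩
  have hne : nonzeros (List.ofFn x) ≠ [] := by
    obtain ⟨j, hj⟩ := Function.ne_iff.1 hx
    exact fun h0 => hj (nonzeros_eq_nil.1 h0 _ (List.mem_ofFn.2 ⟨j, rfl⟩))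
  obtain ⟨p, hp, hxp, hJp⟩ := h.exists_ne_zero hne q (Nat.le_of_lt_succ q.isLt)
  simp only [List.length_ofFn] at hp
  exact ⟨⟨p, hp⟩, by simpa using hxp, Fin.ext hJp⟩

lemma sMinus_eq_signChanges_of_ne_zero {n : ℕ} {y : Fin n → ℝ} (hy : ∀ j, y j ≠ 0) :
    sMinus y = signChanges (List.ofFn y) := by
  rw [sMinus_eq_signChanges_nonzeros, nonzeros_eq_self (by simpa [List.mem_ofFn] using hy)]

lemma sMinus_le_of_eq_of_ne_zero {n : ℕ} {y g : Fin n → ℝ} (h : ∀ j, y j ≠ 0 → g j = y j) :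
    sMinus y ≤ sMinus g := by
  have hsub : (nonzeros (List.ofFn y)).Sublist (nonzeros (List.ofFn g)) := by
    simp only [nonzeros, List.ofFn_eq_map, List.filter_map]
    rw [List.map_congr_left fun j hj => (h j (by simpa using (List.mem_filter.1 hj).2)).symm]
    refine (List.monotone_filter_right _ fun j hj => ?_).map g
    simpa [h j (by simpa using hj)] using hj
  exact signChanges_le_of_sublist hsub fun x hx => (mem_nonzeros.1 hx).2

def fillZeros {n : ℕ} (y : Fin n → ℝ) (ε : Fin n → Bool) : Fin n → ℝ :=
  fun j => if y j = 0 then (if ε j then 1 else -1) else y j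

lemma fillZeros_ne_zero {n : ℕ} (y : Fin n → ℝ) (ε : Fin n → Bool) (j : Fin n) :
    fillZeros y ε j ≠ 0 := by
  unfold fillZeros; split_ifs <;> norm_num [*]

lemma fillZeros_of_ne_zero {n : ℕ} {y : Fin n → ℝ} (ε : Fin n → Bool) {j : Fin n}
    (hj : y j ≠ 0) : fillZeros y ε j = y j := if_neg hj

lemma sPlus_eq_sup_sMinus_fillZeros {n : ℕ} (y : Fin n → ℝ) :
    sPlus y = Finset.univ.sup fun ε => sMinus (fillZeros y ε) := by
  simp only [sMinus_eq_signChanges_of_ne_zero (fillZeros_ne_zero y _)]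
  rfl

lemma sMinus_le_sPlus {n : ℕ} (y : Fin n → ℝ) : sMinus y ≤ sPlus y := by
  rw [sPlus_eq_sup_sMinus_fillZeros]
  exact (sMinus_le_of_eq_of_ne_zero fun j => fillZeros_of_ne_zero fun _ => true).trans
    (Finset.le_sup (f := fun ε => sMinus (fillZeros y ε)) (Finset.mem_univ _))

lemma exists_alternating_of_le_sMinus {n m : ℕ} {y : Fin n → ℝ} (hy : y ≠ 0)
    (hm : m ≤ sMinus y) : ∃ (i : Fin (m + 1) → Fin n) (σ : ℝ), StrictMono i ∧
      (σ = 1 ∨ σ = -1) ∧ ∀ q : Fin (m + 1), 0 < σ * (-1) ^ (q : ℕ) * y (i q) := by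
  obtain ⟨σ, J, hσ, hJ, hsign, hfib⟩ := exists_sign_blocks y
  choose i hyi hJi using fun q : Fin (m + 1) => hfib hy (Fin.castLE (by omega) q)
  have hJi' : ∀ q, (J (i q) : ℕ) = q := fun q => by simp [hJi q]
  refine ⟨i, σ, fun q q' hqq' => lt_of_not_ge fun h => ?_, hσ, fun q => ?_⟩
  · have := hJ h
    rw [Fin.le_def, hJi', hJi'] at this
    exact absurd hqq' (not_lt.2 this)
  · have hσ0 : σ ≠ 0 := by rcases hσ with rfl | rfl <;> norm_num
    rw [← hJi']
    exact (hsign _).lt_of_ne (by simp [hσ0, hyi q])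

lemma exists_alternating_of_le_sPlus {n m : ℕ} (hn : 0 < n) {y : Fin n → ℝ}
    (hm : m ≤ sPlus y) : ∃ (i : Fin (m + 1) → Fin n) (σ : ℝ), StrictMono i ∧
      (σ = 1 ∨ σ = -1) ∧ ∀ q : Fin (m + 1), 0 ≤ σ * (-1) ^ (q : ℕ) * y (i q) := by
  obtain ⟨ε, -, hε⟩ := Finset.exists_mem_eq_sup Finset.univ Finset.univ_nonempty
    fun ε => sMinus (fillZeros y ε)
  rw [sPlus_eq_sup_sMinus_fillZeros, hε] at hm
  have hne : fillZeros y ε ≠ 0 := fun h => fillZeros_ne_zero y ε ⟨0, hn⟩ (congrFun h _)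
  obtain ⟨i, σ, hi, hσ, halt⟩ := exists_alternating_of_le_sMinus hne hm
  refine ⟨i, σ, hi, hσ, fun q => ?_⟩
  by_cases hyq : y (i q) = 0
  · simp [hyq]
  · simpa [fillZeros_of_ne_zero ε hyq] using (halt q).le

def fiberMatrix {n k : ℕ} (J : Fin n → Fin k) (w : Fin n → ℝ) : Matrix (Fin n) (Fin k) ℝ :=
  Matrix.of fun j q => if J j = q then w j else 0

lemma fiberMatrix_mulVec {n k : ℕ} (J : Fin n → Fin k) (w : Fin n → ℝ) (v : Fin k → ℝ) :
    fiberMatrix J w *ᵥ v = fun j => w j * v (J j) := by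
  ext j
  simp [fiberMatrix, mulVec, dotProduct]

lemma det_mul_fiberMatrix_pos {k n : ℕ} {M : Matrix (Fin k) (Fin n) ℝ}
    (hM : ∀ c : Fin k → Fin n, StrictMono c → 0 < (M.submatrix id c).det)
    {J : Fin n → Fin k} (hJ : Monotone J) {w : Fin n → ℝ} (hw : ∀ j, 0 ≤ w j)
    (hfib : ∀ q, ∃ j, J j = q ∧ 0 < w j) : 0 < (M * fiberMatrix J w).det := by
  classical
  have hrows : (M * fiberMatrix J w)ᵀ =
      fun q => ∑ j ∈ Finset.univ.filter (J · = q), w j • Mᵀ j := by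
    ext q p
    simp [mul_apply, fiberMatrix, Finset.sum_apply, Finset.sum_filter, mul_comm]
  have hterm : ∀ f : Fin k → Fin n,
      detRowAlternating (fun q => w (f q) • Mᵀ (f q)) =
        (∏ q, w (f q)) * (M.submatrix id f).det := by
    intro f
    rw [AlternatingMap.map_smul_univ, smul_eq_mul, ← det_transpose]
    rfl
  have hmono : ∀ f ∈ Fintype.piFinset fun q => Finset.univ.filter (J · = q), StrictMono f := by
    intro f hf q q' hqq'
    simp only [Fintype.mem_piFinset, Finset.mem_filter, Finset.mem_univ, true_and] at hf
    refine lt_of_not_ge fun h => absurd hqq' (not_lt.2 ?_)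
    simpa [hf] using hJ h
  rw [← det_transpose, hrows]
  change 0 < (detRowAlternating : (Fin k → ℝ) [⋀^Fin k]→ₗ[ℝ] ℝ).toMultilinearMap _
  rw [MultilinearMap.map_sum_finset]
  choose f hfJ hfw using hfib
  have hf : f ∈ Fintype.piFinset fun q => Finset.univ.filter (J · = q) := by simp [hfJ]
  refine Finset.sum_pos' (fun g hg => ?_) ⟨f, hf, ?_⟩
  · rw [AlternatingMap.coe_multilinearMap, hterm]
    exact mul_nonneg (Finset.prod_nonneg fun q _ => hw _) (hM g (hmono g hg)).le
  · rw [AlternatingMap.coe_multilinearMap, hterm]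
    exact mul_pos (Finset.prod_pos fun q _ => hfw q) (hM f (hmono f hf))

lemma sum_alternating_mulVec_mul_det_eq_zero {k : ℕ} (C : Matrix (Fin (k + 1)) (Fin k) ℝ)
    (v : Fin k → ℝ) :
    ∑ p : Fin (k + 1), (-1) ^ (p : ℕ) * (C *ᵥ v) p * (C.submatrix p.succAbove id).det = 0 := by
  -- Laplace expansion along the first column of the singular matrix `[C *ᵥ v | C]`
  let D : Matrix (Fin (k + 1)) (Fin (k + 1)) ℝ := of fun p => Fin.cons ((C *ᵥ v) p) (C p)
  have hD : D.det = 0 := by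
    refine exists_mulVec_eq_zero_iff.1
      ⟨Fin.cons (-1) v, fun h => by simpa using congrFun h 0, ?_⟩
    ext p
    simp [D, mulVec, dotProduct, Fin.sum_univ_succ]
  rw [← hD, det_succ_column_zero]
  rfl

lemma eq_zero_of_forall_alternating_mulVec {k : ℕ} {C : Matrix (Fin (k + 2)) (Fin (k + 1)) ℝ}
    (hC : ∀ p : Fin (k + 2), 0 < (C.submatrix p.succAbove id).det) {ε : ℝ} (hε : ε ≠ 0)
    {v : Fin (k + 1) → ℝ} (hv : ∀ p : Fin (k + 2), 0 ≤ ε * (-1) ^ (p : ℕ) * (C *ᵥ v) p) :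
    v = 0 := by
  have hsum : ∑ p : Fin (k + 2), ε * (-1) ^ (p : ℕ) * (C *ᵥ v) p *
      (C.submatrix p.succAbove id).det = 0 := by
    rw [← mul_zero ε, ← sum_alternating_mulVec_mul_det_eq_zero C v, Finset.mul_sum]
    simp only [mul_assoc]
  have hCv : C *ᵥ v = 0 := by
    ext p
    have := (Finset.sum_eq_zero_iff_of_nonneg fun p _ => mul_nonneg (hv p) (hC p).le).1 hsum p
      (Finset.mem_univ _)
    simpa [hε, (hC p).ne'] using this
  exact eq_zero_of_mulVec_eq_zero (hC (Fin.last _)).ne' (funext fun p => congrFun hCv _)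

lemma fiberMatrix_abs_mulVec_neg_one_pow {n k : ℕ} {x : Fin n → ℝ} {J : Fin n → Fin k} {σ : ℝ}
    (hσ : σ = 1 ∨ σ = -1) (hsign : ∀ j, 0 ≤ σ * (-1) ^ (J j : ℕ) * x j) :
    fiberMatrix J (fun j => |x j|) *ᵥ (fun q => (-1) ^ (q : ℕ)) = σ • x := by
  rw [fiberMatrix_mulVec]
  ext j
  have hpow : ((-1 : ℝ) ^ (J j : ℕ)) * (-1) ^ (J j : ℕ) = 1 := by rw [← mul_pow]; norm_num
  have habs : |x j| = σ * (-1) ^ (J j : ℕ) * x j := by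
    rw [← abs_of_nonneg (hsign j), abs_mul, abs_mul, abs_neg_one_pow, mul_one]
    rcases hσ with rfl | rfl <;> simp
  rw [habs, Pi.smul_apply, smul_eq_mul]
  linear_combination σ * x j * hpow

theorem IsTP.sPlus_mulVec_le {m n : ℕ} {M : Matrix (Fin m) (Fin n) ℝ} (hM : IsTP M)
    {x : Fin n → ℝ} (hx : x ≠ 0) : sPlus (M *ᵥ x) ≤ sMinus x := by
  by_contra! hlt
  set l := sMinus x
  have hm : 0 < m := by
    rcases m with _ | m
    · simp [sPlus, signChanges] at hlt
    · exact m.succ_pos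
  obtain ⟨i, ε, hi, hε, halt⟩ := exists_alternating_of_le_sPlus (m := l + 1) hm hlt
  obtain ⟨σ, J, hσ, hJ, hsign, hfib⟩ := exists_sign_blocks x
  set B := fiberMatrix J fun j => |x j|
  set v : Fin (l + 1) → ℝ := fun q => (-1) ^ (q : ℕ)
  set C := (M * B).submatrix i id
  have hC : ∀ p : Fin (l + 2), 0 < (C.submatrix p.succAbove id).det := by
    intro p
    change 0 < (M.submatrix (i ∘ p.succAbove) id * B).det
    refine det_mul_fiberMatrix_pos (fun c hc => ?_) hJ (fun j => abs_nonneg _) fun q => ?_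
    · exact hM _ (i ∘ p.succAbove) c (hi.comp (Fin.strictMono_succAbove p)) hc
    · exact (hfib hx q).imp fun j h => ⟨h.2, abs_pos.2 h.1⟩
  have hCv : ∀ p, (C *ᵥ v) p = σ * (M *ᵥ x) (i p) := fun p => by
    change ((M * B) *ᵥ v) (i p) = _
    rw [← mulVec_mulVec, fiberMatrix_abs_mulVec_neg_one_pow hσ hsign, mulVec_smul,
      Pi.smul_apply, smul_eq_mul]
  have hεσ : ε * σ ≠ 0 := mul_ne_zero (left_ne_zero_of_mul_eq_one (mul_self_eq_one_iff.2 hε))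
    (left_ne_zero_of_mul_eq_one (mul_self_eq_one_iff.2 hσ))
  have hv : v = 0 := eq_zero_of_forall_alternating_mulVec hC hεσ fun p => by
    calc 0 ≤ σ * σ * (ε * (-1) ^ (p : ℕ) * (M *ᵥ x) (i p)) := by
          rw [mul_self_eq_one_iff.2 hσ, one_mul]; exact halt p
      _ = ε * σ * (-1) ^ (p : ℕ) * (C *ᵥ v) p := by rw [hCv]; ring
  simpa [v] using congrFun hv 0

lemma IsTP.det_pos {n : ℕ} {M : Matrix (Fin n) (Fin n) ℝ} (hM : IsTP M) : 0 < M.det := by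
  simpa using hM n id id strictMono_id strictMono_id

lemma IsTP.mulVec_ne_zero {n : ℕ} {M : Matrix (Fin n) (Fin n) ℝ} (hM : IsTP M)
    {x : Fin n → ℝ} (hx : x ≠ 0) : M *ᵥ x ≠ 0 :=
  fun h => hx (eq_zero_of_mulVec_eq_zero hM.det_pos.ne' h)

theorem stmt3_general {n : ℕ}
    (a b : ℝ)
    (Φ : ℝ → ℝ → Matrix (Fin n) (Fin n) ℝ)
    (hTP : ∀ t0 t : ℝ, a < t0 → t0 < t → t < b → IsTP (Φ t t0))
    (z : ℝ → Fin n → ℝ)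
    (hz : ∀ t0 ∈ Set.Ioo a b, ∀ t ∈ Set.Ioo a b, t0 ≤ t → z t = (Φ t t0).mulVec (z t0))
    (hz0 : ∃ t1 ∈ Set.Ioo a b, z t1 ≠ 0)
    :
    (∀ t0 ∈ Set.Ioo a b, ∀ t ∈ Set.Ioo a b, t0 < t → sPlus (z t) ≤ sMinus (z t0)) ∧
    (∀ s ∈ Set.Ioo a b, ∀ t ∈ Set.Ioo a b, s ≤ t →
      sMinus (z t) ≤ sMinus (z s) ∧ sPlus (z t) ≤ sPlus (z s)) := by
  obtain ⟨t1, ht1, hz1⟩ := hz0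
  have hz_ne : ∀ t ∈ Set.Ioo a b, z t ≠ 0 := by
    intro t ht h0
    rcases le_or_gt t t1 with hle | hlt
    · exact hz1 (by rw [hz t ht t1 ht1 hle, h0, mulVec_zero])
    · exact (hTP t1 t ht1.1 hlt ht.2).mulVec_ne_zero hz1 (by rw [← hz t1 ht1 t ht hlt.le, h0])
  have hvar : ∀ t0 ∈ Set.Ioo a b, ∀ t ∈ Set.Ioo a b, t0 < t → sPlus (z t) ≤ sMinus (z t0) := by
    intro t0 ht0 t ht hlt
    rw [hz t0 ht0 t ht hlt.le]
    exact (hTP t0 t ht0.1 hlt ht.2).sPlus_mulVec_le (hz_ne t0 ht0)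
  refine ⟨hvar, fun s hs t ht hst => ?_⟩
  rcases hst.eq_or_lt with rfl | hlt
  · exact ⟨le_rfl, le_rfl⟩
  · exact ⟨(sMinus_le_sPlus _).trans (hvar s hs t ht hlt),
      (hvar s hs t ht hlt).trans (sMinus_le_sPlus _)⟩

/-- If the transition matrix `Φ(t,t0)` of `ż = A(t)z` is TP for all
`a < t0 < t < b`, then any nontrivial solution `z` satisfies
`s^+(z(t)) ≤ s^-(z(t0))` for `t0 < t`, and both `s^-(z(·))` and `s^+(z(·))` are
nonincreasing on `(a,b)`. -/
theorem stmt3 {n : ℕ}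
    (a b : ℝ) (A : ℝ → Matrix (Fin n) (Fin n) ℝ)
    (Φ : ℝ → ℝ → Matrix (Fin n) (Fin n) ℝ)
    (hreg : GoodCoeff a b A) (htrans : IsTransitionOn a b A Φ)
    (hTP : ∀ t0 t : ℝ, a < t0 → t0 < t → t < b → IsTP (Φ t t0))
    (z : ℝ → Fin n → ℝ)
    (hz : ∀ t0 ∈ Set.Ioo a b, ∀ t ∈ Set.Ioo a b, t0 ≤ t → z t = (Φ t t0).mulVec (z t0))
    (hz0 : ∃ t1 ∈ Set.Ioo a b, z t1 ≠ 0)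
    :
    (∀ t0 ∈ Set.Ioo a b, ∀ t ∈ Set.Ioo a b, t0 < t → sPlus (z t) ≤ sMinus (z t0)) ∧
    (∀ s ∈ Set.Ioo a b, ∀ t ∈ Set.Ioo a b, s ≤ t →
      sMinus (z t) ≤ sMinus (z s) ∧ sPlus (z t) ≤ sPlus (z s)) :=
  stmt3_general a b Φ hTP z hz hz0

end
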